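/- Completeness of the reduced sumcheck instance: with q = ∑_{σ ∈ substs V H} inst p σ the honest prover's message and any r in the field, the reduced instance is again a true sumcheck instance: eval q [x ↦ r] = ∑_{σ ∈ substs V H} eval (inst p [x ↦ r]) σ. -/
import Mathlib

open MvPolynomial

/-- Partially evaluate `p` under a partial substitution `σ`. -/
noncomputable def inst {V R : Type*} [CommRing R]
    (p : MvPolynomial V R) (σ : V → Option R) : MvPolynomial V R :=
  aeval (fun x => (σ x).elim (X x) C) p

/-- Evaluate `p` fully, using `σ` where defined and `0` as a default elsewhere. -/
noncomputable def evalSubst {V R : Type*} [CommRing R]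
    (p : MvPolynomial V R) (σ : V → Option R) : R :=
  eval (fun x => (σ x).getD 0) p

/-- `ρ` overridden by `σ` (with `σ` taking priority on its domain). -/
def override {V R : Type*} (ρ σ : V → Option R) : V → Option R :=
  fun x => (σ x).elim (ρ x) some

/-- The partial substitution with domain `W` determined by a function `f : W → H`. -/
def toSubst {V R : Type*} [DecidableEq V] (W : Finset V) (H : Finset R)
    (f : ↥W → ↥H) : V → Option R :=
  fun x => if h : x ∈ W then some ((f ⟨x, h⟩ : ↥H) : R) else none

/-- The singleton substitution `[x ↦ r]`. -/
def single {V R : Type*} [DecidableEq V] (x : V) (r : R) : V → Option R :=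
  fun y => if y = x then some r else none

lemma evalSubst_inst {V R : Type*} [CommRing R]
    (p : MvPolynomial V R) (σ τ : V → Option R) :
    evalSubst (inst p σ) τ = eval (fun y => (σ y).elim ((τ y).getD 0) id) p := by
  unfold evalSubst inst
  rw [aeval_def, eval_eval₂]
  have h1 : (eval fun x => (τ x).getD 0).comp (algebraMap R (MvPolynomial V R))
      = RingHom.id R := by
    ext a; simp [algebraMap_eq]
  rw [h1, eval₂_id]
  exact congrArg (fun g : V → R => eval g p) (funext fun y => by cases σ y <;> simp)

theorem reduced_instance_true {V R : Type*} [CommRing R] [DecidableEq V]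
    (p : MvPolynomial V R) (x : V) (W : Finset V) (H : Finset R) (r : R)
    (hx : x ∉ W) (hvars : (↑p.vars : Set V) ⊆ {x} ∪ ↑W) :
    evalSubst (∑ f : (↥W → ↥H), inst p (toSubst W H f)) (single x r)
      = ∑ f : (↥W → ↥H), evalSubst (inst p (single x r)) (toSubst W H f) := by
  have hsum : evalSubst (∑ f : (↥W → ↥H), inst p (toSubst W H f)) (single x r)
      = ∑ f : (↥W → ↥H), evalSubst (inst p (toSubst W H f)) (single x r) := by
    unfold evalSubst; rw [map_sum]
  rw [hsum]
  refine Finset.sum_congr rfl fun f _ => ?_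
  rw [evalSubst_inst, evalSubst_inst]
  have := eval₂Hom_congr' (f₁ := RingHom.id R)
    (g₁ := fun y => (toSubst W H f y).elim ((single x r y).getD 0) id)
    (g₂ := fun y => (single x r y).elim ((toSubst W H f y).getD 0) id)
    (p₁ := p) (p₂ := p) rfl ?_ rfl
  · exact this
  · intro i hi _
    have hi' : i ∈ ({x} : Set V) ∪ ↑W := hvars hi
    rcases hi' with h | h
    · simp only [Set.mem_singleton_iff] at h
      subst h
      simp [toSubst, single, hx]
    · have hne : i ≠ x := fun e => hx (e ▸ h)
      have hW : i ∈ W := h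
      simp [toSubst, single, if_neg hne, dif_pos hW]
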